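/- Let B be a k-bialgebra, A a k-algebra, and ψ : B ⊗ A → A ⊗ B a k-linear map satisfying the four cross-product-algebra conditions (so that A #_ψ B is an algebra). Then A #_ψ B equals the left smash product algebra of A by B — i.e. A is a left B-module algebra via b·a := (id_A ⊗ ε_B)ψ(b⊗a) and the multiplication of A #_ψ B is (a⊗b)(a'⊗b') = Σ a(b₁·a') ⊗ b₂ b' — if and only if ψ satisfies ψ(b ⊗ a) = Σ (b₁ · a) ⊗ b₂ for all a ∈ A, b ∈ B, where b·a = (id_A ⊗ ε_B)ψ(b⊗a). -/
import Mathlib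
set_option synthInstance.maxHeartbeats 1000000
set_option maxHeartbeats 4000000


open TensorProduct

variable {k A B : Type*} [CommRing k] [Ring A] [Algebra k A]
  [Ring B] [Bialgebra k B]

/-- The cross product multiplication on `A ⊗ B` induced by `ψ : B ⊗ A → A ⊗ B`. -/
noncomputable def crossMul (ψ : B ⊗[k] A →ₗ[k] A ⊗[k] B) :
    (A ⊗[k] B) ⊗[k] (A ⊗[k] B) →ₗ[k] A ⊗[k] B :=
  TensorProduct.map (LinearMap.mul' k A) (LinearMap.mul' k B) ∘ₗ
    (TensorProduct.assoc k (A ⊗[k] A) B B).toLinearMap ∘ₗ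
    TensorProduct.map
      ((TensorProduct.assoc k A A B).symm.toLinearMap ∘ₗ
        TensorProduct.map (LinearMap.id : A →ₗ[k] A) ψ ∘ₗ
        (TensorProduct.assoc k A B A).toLinearMap)
      (LinearMap.id : B →ₗ[k] B) ∘ₗ
    (TensorProduct.assoc k (A ⊗[k] B) A B).symm.toLinearMap

/-- (a): `ψ ∘ (m_B ⊗ id_A) = (id_A ⊗ m_B) ∘ (ψ ⊗ id_B) ∘ (id_B ⊗ ψ)`. -/
def psiCondA (ψ : B ⊗[k] A →ₗ[k] A ⊗[k] B) : Prop :=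
  ψ ∘ₗ TensorProduct.map (LinearMap.mul' k B) (LinearMap.id : A →ₗ[k] A) =
    TensorProduct.map (LinearMap.id : A →ₗ[k] A) (LinearMap.mul' k B) ∘ₗ
      (TensorProduct.assoc k A B B).toLinearMap ∘ₗ
      TensorProduct.map ψ (LinearMap.id : B →ₗ[k] B) ∘ₗ
      (TensorProduct.assoc k B A B).symm.toLinearMap ∘ₗ
      TensorProduct.map (LinearMap.id : B →ₗ[k] B) ψ ∘ₗ
      (TensorProduct.assoc k B B A).toLinearMap

/-- (b): `ψ ∘ (id_B ⊗ m_A) = (m_A ⊗ id_B) ∘ (id_A ⊗ ψ) ∘ (ψ ⊗ id_A)`. -/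
def psiCondB (ψ : B ⊗[k] A →ₗ[k] A ⊗[k] B) : Prop :=
  ψ ∘ₗ TensorProduct.map (LinearMap.id : B →ₗ[k] B) (LinearMap.mul' k A) =
    TensorProduct.map (LinearMap.mul' k A) (LinearMap.id : B →ₗ[k] B) ∘ₗ
      (TensorProduct.assoc k A A B).symm.toLinearMap ∘ₗ
      TensorProduct.map (LinearMap.id : A →ₗ[k] A) ψ ∘ₗ
      (TensorProduct.assoc k A B A).toLinearMap ∘ₗ
      TensorProduct.map ψ (LinearMap.id : A →ₗ[k] A) ∘ₗ
      (TensorProduct.assoc k B A A).symm.toLinearMap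

/-- (c): `ψ(b ⊗ 1_A) = 1_A ⊗ b`. -/
def psiCondC (ψ : B ⊗[k] A →ₗ[k] A ⊗[k] B) : Prop :=
  ∀ b : B, ψ (b ⊗ₜ[k] (1 : A)) = (1 : A) ⊗ₜ[k] b

/-- (d): `ψ(1_B ⊗ a) = a ⊗ 1_B`. -/
def psiCondD (ψ : B ⊗[k] A →ₗ[k] A ⊗[k] B) : Prop :=
  ∀ a : A, ψ ((1 : B) ⊗ₜ[k] a) = a ⊗ₜ[k] (1 : B)

/-- `act : B ⊗ A → A` makes the algebra `A` a left `B`-module algebra. -/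
def IsModuleAlgebraAct (act : B ⊗[k] A →ₗ[k] A) : Prop :=
  (∀ a : A, act ((1 : B) ⊗ₜ[k] a) = a) ∧
  (act ∘ₗ TensorProduct.map (LinearMap.mul' k B) (LinearMap.id : A →ₗ[k] A) =
    act ∘ₗ TensorProduct.map (LinearMap.id : B →ₗ[k] B) act ∘ₗ
      (TensorProduct.assoc k B B A).toLinearMap) ∧
  (act ∘ₗ TensorProduct.map (LinearMap.id : B →ₗ[k] B) (LinearMap.mul' k A) =
    LinearMap.mul' k A ∘ₗ TensorProduct.map act act ∘ₗ
      (TensorProduct.tensorTensorTensorComm k B B A A).toLinearMap ∘ₗ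
      TensorProduct.map (Coalgebra.comul (R := k) (A := B))
        (LinearMap.id : A ⊗[k] A →ₗ[k] A ⊗[k] A)) ∧
  (∀ b : B, act (b ⊗ₜ[k] (1 : A)) = Coalgebra.counit (R := k) b • (1 : A))

/-- The map `ψ(b ⊗ a) = Σ (b₁ · a) ⊗ b₂` associated to a left action of `B` on `A`. -/
noncomputable def smashPsiOf (act : B ⊗[k] A →ₗ[k] A) : B ⊗[k] A →ₗ[k] A ⊗[k] B :=
  TensorProduct.map act (LinearMap.id : B →ₗ[k] B) ∘ₗ
    (TensorProduct.assoc k B A B).symm.toLinearMap ∘ₗ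
    TensorProduct.map (LinearMap.id : B →ₗ[k] B) (TensorProduct.comm k B A).toLinearMap ∘ₗ
    (TensorProduct.assoc k B B A).toLinearMap ∘ₗ
    TensorProduct.map (Coalgebra.comul (R := k) (A := B)) (LinearMap.id : A →ₗ[k] A)

/-- The canonical left action `b · a := (id_A ⊗ ε_B)(ψ(b ⊗ a))` of `B` on `A`. -/
noncomputable def actOf (ψ : B ⊗[k] A →ₗ[k] A ⊗[k] B) : B ⊗[k] A →ₗ[k] A :=
  (TensorProduct.rid k A).toLinearMap ∘ₗ
    TensorProduct.map (LinearMap.id : A →ₗ[k] A) (Coalgebra.counit (R := k) (A := B)) ∘ₗ ψ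

lemma crossMul_tmul (ψ : B ⊗[k] A →ₗ[k] A ⊗[k] B) (a a' : A) (b b' : B) :
    crossMul ψ ((a ⊗ₜ[k] b) ⊗ₜ[k] (a' ⊗ₜ[k] b')) =
      TensorProduct.map (LinearMap.mulLeft k a) (LinearMap.mulRight k b') (ψ (b ⊗ₜ[k] a')) := by
  simp only [crossMul, LinearMap.comp_apply, LinearEquiv.coe_coe, assoc_symm_tmul, map_tmul,
    assoc_tmul, LinearMap.id_apply]
  generalize ψ (b ⊗ₜ[k] a') = p
  induction p using TensorProduct.induction_on with
  | zero => rw [tmul_zero, map_zero, zero_tmul, map_zero, map_zero, map_zero]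
  | tmul x y => simp [LinearMap.mul'_apply]
  | add p q hp hq => simp [tmul_add, add_tmul, hp, hq]

lemma auxE (x : A) (r : A ⊗[k] B) :
    (TensorProduct.rid k A) (TensorProduct.map (LinearMap.id : A →ₗ[k] A)
        (Coalgebra.counit (R := k) (A := B))
      (TensorProduct.map (LinearMap.mul' k A) (LinearMap.id : B →ₗ[k] B)
        ((TensorProduct.assoc k A A B).symm (x ⊗ₜ[k] r)))) =
    x * (TensorProduct.rid k A) (TensorProduct.map (LinearMap.id : A →ₗ[k] A)
        (Coalgebra.counit (R := k) (A := B)) r) := by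
  induction r using TensorProduct.induction_on with
  | zero => simp
  | add p q hp hq => simp only [tmul_add, map_add, hp, hq, mul_add]
  | tmul u v =>
    simp only [assoc_symm_tmul, map_tmul, LinearMap.id_apply, LinearMap.mul'_apply, rid_tmul,
      mul_smul_comm]

/-- `A #_ψ B` is the left smash product algebra (i.e. `A` is a left
`B`-module algebra via `b · a = (id ⊗ ε_B)ψ(b⊗a)` and the multiplication is the smash
one) if and only if `ψ(b ⊗ a) = Σ (b₁ · a) ⊗ b₂`. -/
theorem crossProd_eq_smashProd_iff (ψ : B ⊗[k] A →ₗ[k] A ⊗[k] B)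
    (hA : psiCondA ψ) (hB : psiCondB ψ) (hC : psiCondC ψ) (hD : psiCondD ψ) :
    (IsModuleAlgebraAct (actOf ψ) ∧ crossMul ψ = crossMul (smashPsiOf (actOf ψ))) ↔
      ψ = smashPsiOf (actOf ψ) := by
  constructor
  · rintro ⟨-, hmul⟩
    apply TensorProduct.ext'
    intro b a
    have h := LinearMap.congr_fun hmul (((1 : A) ⊗ₜ[k] b) ⊗ₜ[k] (a ⊗ₜ[k] (1 : B)))
    simpa only [crossMul_tmul, LinearMap.mulLeft_one, LinearMap.mulRight_one,
      TensorProduct.map_id, LinearMap.id_apply] using h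
  · intro hψ
    refine ⟨⟨?_, ?_, ?_, ?_⟩, by rw [← hψ]⟩
    · intro a
      simp [actOf, hD a, Bialgebra.counit_one]
    · ext b b' a
      have h := LinearMap.congr_fun hA ((b ⊗ₜ[k] b') ⊗ₜ[k] a)
      simp only [LinearMap.comp_apply, LinearEquiv.coe_coe, map_tmul, LinearMap.id_apply,
        LinearMap.mul'_apply, assoc_tmul, assoc_symm_tmul, AlgebraTensorModule.curry_apply,
        curry_apply, LinearMap.coe_restrictScalars] at h ⊢
      simp only [actOf, LinearMap.comp_apply, LinearEquiv.coe_coe]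
      rw [h]
      generalize ψ (b' ⊗ₜ[k] a) = p
      induction p using TensorProduct.induction_on with
      | zero => simp
      | add p q hp hq => simp only [tmul_add, map_add, hp, hq]
      | tmul x y =>
        simp only [assoc_symm_tmul, map_tmul, LinearMap.id_apply, rid_tmul, map_smul, tmul_smul]
        generalize ψ (b ⊗ₜ[k] x) = q
        induction q using TensorProduct.induction_on with
        | zero => simp
        | add p q hp hq => simp only [tmul_add, add_tmul, map_add, hp, hq, smul_add]
        | tmul u v =>
          simp only [assoc_tmul, map_tmul, LinearMap.id_apply, LinearMap.mul'_apply, rid_tmul,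
            Bialgebra.counit_mul]
          rw [mul_comm, mul_smul]
    · ext b a a'
      have h := LinearMap.congr_fun hB (b ⊗ₜ[k] (a ⊗ₜ[k] a'))
      simp only [LinearMap.comp_apply, LinearEquiv.coe_coe, map_tmul, LinearMap.id_apply,
        LinearMap.mul'_apply, assoc_tmul, assoc_symm_tmul, AlgebraTensorModule.curry_apply,
        curry_apply, LinearMap.coe_restrictScalars] at h ⊢
      simp only [actOf, LinearMap.comp_apply, LinearEquiv.coe_coe] at h ⊢
      rw [h, LinearMap.congr_fun hψ (b ⊗ₜ[k] a)]
      simp only [smashPsiOf, actOf, LinearMap.comp_apply, LinearEquiv.coe_coe, map_tmul,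
        LinearMap.id_apply]
      generalize Coalgebra.comul (R := k) b = c
      induction c using TensorProduct.induction_on with
      | zero => simp
      | add p q hp hq => simp only [add_tmul, map_add, hp, hq]
      | tmul b1 b2 =>
        simp only [assoc_tmul, map_tmul, LinearMap.id_apply, comm_tmul, assoc_symm_tmul,
          tensorTensorTensorComm_tmul, LinearMap.mul'_apply, LinearMap.comp_apply,
          LinearEquiv.coe_coe]
        rw [auxE]
    · intro b
      simp [actOf, hC b]
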